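/- Let s > 1, C > 0, and ω₁, ω₂ > 0 with c₀ h^{1−1/s} ≤ ω_t ≤ C₀ h^{1−1/s} for all t ∈ [0,1], where ω_t = (1−t)ω₁ + tω₂ and 0 < h ≤ 1. Then h^{−n} ∫₀¹ dt ∫_{ℂ^n} exp(−F_{ω_t}(x)/h − C·ω_t^{−1/(s−1)}·[|x| > ω_t] − C·|x|^{−1/(s−1)}·[|x| ≤ ω_t]) L(dx) ≤ C'·exp(−c'·h^{−1/s}) for constants C', c' > 0 independent of h, where F_ω is as before (F_ω(x)=|x|² for |x|≤ω, ω|x| for |x|>ω) and [·] denotes the indicator. -/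

import Mathlib

/-
For `ω` in the window `c₀ h^{1-1/s} ≤ ω ≤ C₀ h^{1-1/s}` and `x ≠ 0`, the flatness factor is at
least `C ω^{-1/(s-1)} ≥ C C₀^{-1/(s-1)} h^{-1/s}`, while `F_ω(x)/h ≥ c₀ (|x| - C₀)` because
`ω/h ≥ c₀` and `ω ≤ C₀`. So, uniformly in `t`, the `x`-integral is at most
`exp(-c₁ h^{-1/s}) ∫ exp(-c₀ (|x| - C₀))`. Writing `u = h^{-1/s} ≥ 1`, the prefactor
`h^{-n} = u^{ns}` is absorbed by half of the exponential, as `u^p e^{-bu} ≤ ⌈p⌉! / b^⌈p⌉`.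
-/

open MeasureTheory

/-- Euclidean norm on `ℂ^n`. -/
noncomputable def euclNorm {n : ℕ} (z : Fin n → ℂ) : ℝ :=
  Real.sqrt (∑ j, ‖z j‖ ^ 2)

/-- `F_ω(z) = |z|²` for `|z| ≤ ω`, `ω|z|` for `|z| > ω`. -/
noncomputable def Fw {n : ℕ} (ω : ℝ) (z : Fin n → ℂ) : ℝ :=
  if euclNorm z ≤ ω then euclNorm z ^ 2 else ω * euclNorm z

open Real

section EuclNorm

variable {n : ℕ}

theorem euclNorm_eq_norm_toLp (z : Fin n → ℂ) :
    euclNorm z = ‖WithLp.toLp 2 z‖ :=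
  (EuclideanSpace.norm_eq _).symm

theorem euclNorm_nonneg (z : Fin n → ℂ) : 0 ≤ euclNorm z := sqrt_nonneg _

@[fun_prop]
theorem continuous_euclNorm : Continuous (euclNorm (n := n)) := by
  unfold euclNorm; fun_prop

theorem norm_le_euclNorm (z : Fin n → ℂ) : ‖z‖ ≤ euclNorm z := by
  rw [euclNorm_eq_norm_toLp, pi_norm_le_iff_of_nonneg (norm_nonneg _)]
  exact PiLp.norm_apply_le (WithLp.toLp 2 z)

theorem euclNorm_pos {z : Fin n → ℂ} (hz : z ≠ 0) : 0 < euclNorm z :=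
  (norm_pos_iff.2 hz).trans_le (norm_le_euclNorm z)

end EuclNorm

theorem rpow_mul_exp_neg_mul_le (p : ℝ) {b u : ℝ} (hb : 0 < b) (hu : 1 ≤ u) :
    u ^ p * exp (-(b * u)) ≤ ⌈p⌉₊.factorial / b ^ ⌈p⌉₊ := by
  set m := ⌈p⌉₊
  have hpow : u ^ p ≤ u ^ m := by
    rw [← rpow_natCast]; exact rpow_le_rpow_of_exponent_le hu (Nat.le_ceil p)
  have hexp : (b * u) ^ m ≤ m.factorial * exp (b * u) := by
    have := pow_div_factorial_le_exp (b * u) (by positivity) m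
    rw [div_le_iff₀ (by positivity)] at this
    linarith
  rw [le_div_iff₀ (by positivity)]
  calc u ^ p * exp (-(b * u)) * b ^ m ≤ u ^ m * exp (-(b * u)) * b ^ m := by gcongr
    _ = (b * u) ^ m * exp (-(b * u)) := by ring
    _ ≤ m.factorial * exp (b * u) * exp (-(b * u)) := by gcongr
    _ = m.factorial := by rw [mul_assoc, ← exp_add, add_neg_cancel, exp_zero, mul_one]

theorem integrable_exp_neg_mul_norm {E : Type*} [NormedAddCommGroup E] [NormedSpace ℝ E]
    [FiniteDimensional ℝ E] [MeasurableSpace E] [BorelSpace E] (μ : Measure E)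
    [μ.IsAddHaarMeasure] {b : ℝ} (hb : 0 < b) :
    Integrable (fun x ↦ exp (-(b * ‖x‖))) μ := by
  set p : ℝ := Module.finrank ℝ E + 1
  set M : ℝ := exp b * (⌈p⌉₊.factorial / b ^ ⌈p⌉₊)
  refine ((integrable_one_add_norm (μ := μ) (r := p) (by simp [p])).const_mul M).mono'
    (by fun_prop) (Filter.Eventually.of_forall fun x ↦ ?_)
  have h1 : 0 < 1 + ‖x‖ := by positivity
  have key := rpow_mul_exp_neg_mul_le p hb (le_add_of_nonneg_right (norm_nonneg x))
  rw [norm_of_nonneg (exp_pos _).le, rpow_neg h1.le, ← div_eq_mul_inv, le_div_iff₀ (by positivity)]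
  calc exp (-(b * ‖x‖)) * (1 + ‖x‖) ^ p
      = exp b * ((1 + ‖x‖) ^ p * exp (-(b * (1 + ‖x‖)))) := by
        rw [mul_comm (exp b), mul_assoc, ← exp_add]; ring_nf
    _ ≤ M := mul_le_mul_of_nonneg_left key (exp_pos b).le

theorem integrable_exp_neg_mul_euclNorm (n : ℕ) {b : ℝ} (hb : 0 < b) :
    Integrable (fun x : Fin n → ℂ ↦ exp (-(b * euclNorm x))) :=
  (integrable_exp_neg_mul_norm volume hb).mono' (by fun_prop) <|
    Filter.Eventually.of_forall fun x ↦ by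
      rw [norm_of_nonneg (exp_pos _).le]
      gcongr
      exact norm_le_euclNorm x

theorem integrable_exp_neg_mul_euclNorm_sub (n : ℕ) {b : ℝ} (hb : 0 < b) (R : ℝ) :
    Integrable (fun x : Fin n → ℂ ↦ exp (-(b * (euclNorm x - R)))) := by
  have : (fun x : Fin n → ℂ ↦ exp (-(b * (euclNorm x - R))))
      = fun x ↦ exp (b * R) * exp (-(b * euclNorm x)) := by
    ext x; rw [← exp_add]; ring_nf
  simpa only [this] using (integrable_exp_neg_mul_euclNorm n hb).const_mul _

theorem setIntegral_Icc_zero_one_le {f : ℝ → ℝ} {B : ℝ} (hf : ∀ t, 0 ≤ f t)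
    (hB : ∀ t ∈ Set.Icc (0 : ℝ) 1, f t ≤ B) : ∫ t in Set.Icc (0 : ℝ) 1, f t ≤ B := by
  calc ∫ t in Set.Icc (0 : ℝ) 1, f t ≤ ∫ _ in Set.Icc (0 : ℝ) 1, B :=
        integral_mono_of_nonneg (.of_forall hf) (integrableOn_const (by simp))
          ((ae_restrict_iff' measurableSet_Icc).2 (.of_forall hB))
    _ = B := by simp

theorem mul_rpow_one_sub_inv_rpow_neg_inv_sub_one {s : ℝ} (hs : 1 < s) {a h : ℝ} (ha : 0 ≤ a)
    (hh : 0 ≤ h) :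
    (a * h ^ (1 - 1 / s)) ^ (-(1 / (s - 1))) = a ^ (-(1 / (s - 1))) * h ^ (-(1 / s)) := by
  have : s - 1 ≠ 0 := by linarith
  rw [mul_rpow ha (rpow_nonneg hh _), ← rpow_mul hh]
  congr 2
  field_simp

noncomputable def flatnessWeight {n : ℕ} (C r ω : ℝ) (x : Fin n → ℂ) : ℝ :=
  if ω < euclNorm x then C * ω ^ (-r) else C * euclNorm x ^ (-r)

noncomputable def deformationKernel {n : ℕ} (s C h ω : ℝ) (x : Fin n → ℂ) : ℝ :=
  exp (-(Fw ω x) / h - flatnessWeight C (1 / (s - 1)) ω x)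

section Pointwise

variable {n : ℕ} {x : Fin n → ℂ}

theorem mul_sub_le_Fw_div {a h ω R : ℝ} (hh : 0 < h) (ha : 0 ≤ a) (haω : a * h ≤ ω)
    (hωR : ω ≤ R) : a * (euclNorm x - R) ≤ Fw ω x / h := by
  have hω : 0 ≤ ω := (by positivity : 0 ≤ a * h).trans haω
  have hx := euclNorm_nonneg x
  unfold Fw
  split_ifs with hxω
  · have : a * (euclNorm x - R) ≤ 0 := mul_nonpos_of_nonneg_of_nonpos ha (by linarith)
    exact this.trans (by positivity)
  · rw [le_div_iff₀ hh]
    nlinarith [mul_le_mul_of_nonneg_right haω hx, mul_nonneg (mul_nonneg ha (hω.trans hωR)) hh.le]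

theorem mul_rpow_neg_le_flatnessWeight {C r ω : ℝ} (hC : 0 ≤ C) (hr : 0 ≤ r)
    (hx : x ≠ 0) : C * ω ^ (-r) ≤ flatnessWeight C r ω x := by
  unfold flatnessWeight
  split_ifs with hxω
  · rfl
  · exact mul_le_mul_of_nonneg_left
      (rpow_le_rpow_of_nonpos (euclNorm_pos hx) (not_lt.1 hxω) (neg_nonpos.2 hr)) hC

end Pointwise

section Window

variable {n : ℕ} {s C c₀ C₀ h ω : ℝ}

theorem deformationKernel_le (hs : 1 < s) (hC : 0 ≤ C) (hc₀ : 0 < c₀) (hh : 0 < h)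
    (hh1 : h ≤ 1) (hω₀ : c₀ * h ^ (1 - 1 / s) ≤ ω) (hω₁ : ω ≤ C₀ * h ^ (1 - 1 / s))
    {x : Fin n → ℂ} (hx : x ≠ 0) :
    deformationKernel s C h ω x ≤
      exp (-(C * C₀ ^ (-(1 / (s - 1))) * h ^ (-(1 / s)))) * exp (-(c₀ * (euclNorm x - C₀))) := by
  have hs1 : 0 < 1 - 1 / s := by
    rw [sub_pos, div_lt_one (by linarith)]; exact hs
  have hr : 0 ≤ 1 / (s - 1) := one_div_nonneg.2 (sub_nonneg.2 hs.le)
  have hθ : h ≤ h ^ (1 - 1 / s) := by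
    simpa using rpow_le_rpow_of_exponent_ge hh hh1
      (sub_le_self 1 (one_div_nonneg.2 (by linarith)))
  have hθ1 : h ^ (1 - 1 / s) ≤ 1 := rpow_le_one hh.le hh1 hs1.le
  have hω : 0 < ω := (by positivity : 0 < c₀ * h ^ (1 - 1 / s)).trans_le hω₀
  have hC₀ : 0 ≤ C₀ := by
    by_contra! hC₀
    nlinarith [rpow_pos_of_pos hh (1 - 1 / s)]
  have hF : c₀ * (euclNorm x - C₀) ≤ Fw ω x / h :=
    mul_sub_le_Fw_div hh hc₀.le (by nlinarith) (by nlinarith)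
  have hW : C * C₀ ^ (-(1 / (s - 1))) * h ^ (-(1 / s)) ≤ flatnessWeight C (1 / (s - 1)) ω x :=
    calc C * C₀ ^ (-(1 / (s - 1))) * h ^ (-(1 / s))
        = C * (C₀ * h ^ (1 - 1 / s)) ^ (-(1 / (s - 1))) := by
          rw [mul_rpow_one_sub_inv_rpow_neg_inv_sub_one hs hC₀ hh.le, mul_assoc]
      _ ≤ C * ω ^ (-(1 / (s - 1))) :=
          mul_le_mul_of_nonneg_left (rpow_le_rpow_of_nonpos hω hω₁ (neg_nonpos.2 hr)) hC
      _ ≤ flatnessWeight C (1 / (s - 1)) ω x :=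
          mul_rpow_neg_le_flatnessWeight hC hr hx
  rw [deformationKernel, ← exp_add, exp_le_exp, neg_div]
  linarith

theorem integral_deformationKernel_le (hn : 1 ≤ n) (hs : 1 < s) (hC : 0 ≤ C) (hc₀ : 0 < c₀)
    (hh : 0 < h) (hh1 : h ≤ 1) (hω₀ : c₀ * h ^ (1 - 1 / s) ≤ ω)
    (hω₁ : ω ≤ C₀ * h ^ (1 - 1 / s)) :
    ∫ x : Fin n → ℂ, deformationKernel s C h ω x ≤
      exp (-(C * C₀ ^ (-(1 / (s - 1))) * h ^ (-(1 / s)))) *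
        ∫ x : Fin n → ℂ, exp (-(c₀ * (euclNorm x - C₀))) := by
  have : Nonempty (Fin n) := ⟨⟨0, hn⟩⟩
  -- `0 ^ (-r) = 0` in Lean, so the pointwise bound fails at `x = 0`, a null set since `n ≥ 1`.
  have hx : ∀ᵐ x : Fin n → ℂ, x ≠ 0 := ae_iff.2 (by simp)
  rw [← integral_const_mul]
  refine integral_mono_of_nonneg (.of_forall fun x ↦ (exp_pos _).le)
    ((integrable_exp_neg_mul_euclNorm_sub n hc₀ C₀).const_mul _) ?_
  filter_upwards [hx] with x hx
  exact deformationKernel_le hs hC hc₀ hh hh1 hω₀ hω₁ hx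

end Window

/-- the Schur bound for the contour-parameter deformation: with
`ω_t = (1−t)ω₁ + tω₂ ≍ h^{1−1/s}`, one has
`h^{-n} ∫₀¹∫ exp(-F_{ω_t}(x)/h − C ω_t^{-1/(s-1)}[|x|>ω_t] − C|x|^{-1/(s-1)}[|x|≤ω_t])
  ≤ C' exp(−c' h^{-1/s})`. -/
theorem deformation_schur_bound (n : ℕ) (hn : 1 ≤ n) (s C c₀ C₀ : ℝ) (hs : 1 < s)
    (hC : 0 < C) (hc₀ : 0 < c₀) (hC₀ : 0 < C₀) :
    ∃ C' c' : ℝ, 0 < C' ∧ 0 < c' ∧ ∀ h ω₁ ω₂ : ℝ, 0 < h → h ≤ 1 →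
      (∀ t : ℝ, 0 ≤ t → t ≤ 1 →
        c₀ * h ^ (1 - 1 / s) ≤ (1 - t) * ω₁ + t * ω₂ ∧
        (1 - t) * ω₁ + t * ω₂ ≤ C₀ * h ^ (1 - 1 / s)) →
      h ^ (-(n : ℝ)) *
          (∫ t in Set.Icc (0 : ℝ) 1, ∫ x : Fin n → ℂ,
            Real.exp (-(Fw ((1 - t) * ω₁ + t * ω₂) x) / h -
              (if ((1 - t) * ω₁ + t * ω₂) < euclNorm x then
                C * ((1 - t) * ω₁ + t * ω₂) ^ (-(1 / (s - 1)))
              else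
                C * euclNorm x ^ (-(1 / (s - 1)))))) ≤
        C' * Real.exp (-c' * h ^ (-(1 / s))) := by
  set c₁ := C * C₀ ^ (-(1 / (s - 1)))
  set K := ∫ x : Fin n → ℂ, exp (-(c₀ * (euclNorm x - C₀)))
  set m := ⌈(n : ℝ) * s⌉₊
  have hc₁ : 0 < c₁ := by positivity
  have hK : 0 < K := integral_exp_pos (integrable_exp_neg_mul_euclNorm_sub n hc₀ C₀)
  refine ⟨K * (m.factorial / (c₁ / 2) ^ m), c₁ / 2, by positivity, by positivity,
    fun h ω₁ ω₂ hh hh1 hω ↦ ?_⟩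
  set u := h ^ (-(1 / s))
  have hu : 1 ≤ u :=
    one_le_rpow_of_pos_of_le_one_of_nonpos hh hh1 (neg_nonpos.2 (one_div_nonneg.2 (by linarith)))
  have hh_n : h ^ (-(n : ℝ)) = u ^ ((n : ℝ) * s) := by
    rw [← rpow_mul hh.le]; congr 1; field_simp
  have hI : ∫ t in Set.Icc (0 : ℝ) 1, ∫ x : Fin n → ℂ,
      deformationKernel s C h ((1 - t) * ω₁ + t * ω₂) x ≤ exp (-(c₁ * u)) * K :=
    setIntegral_Icc_zero_one_le (fun _ ↦ integral_nonneg fun _ ↦ (exp_pos _).le) fun t ht ↦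
      integral_deformationKernel_le hn hs hC.le hc₀ hh hh1 (hω t ht.1 ht.2).1 (hω t ht.1 ht.2).2
  rw [hh_n]
  calc u ^ ((n : ℝ) * s) * ∫ t in Set.Icc (0 : ℝ) 1, ∫ x : Fin n → ℂ,
        deformationKernel s C h ((1 - t) * ω₁ + t * ω₂) x
      ≤ u ^ ((n : ℝ) * s) * (exp (-(c₁ * u)) * K) := by gcongr
    _ = K * (u ^ ((n : ℝ) * s) * exp (-(c₁ / 2 * u))) * exp (-(c₁ / 2) * u) := by
        rw [show -(c₁ * u) = -(c₁ / 2 * u) + -(c₁ / 2) * u by ring, exp_add]; ring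
    _ ≤ K * (m.factorial / (c₁ / 2) ^ m) * exp (-(c₁ / 2) * u) := by
        gcongr; exact rpow_mul_exp_neg_mul_le _ (half_pos hc₁) hu
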